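/- For any bisimplicial set S, the map Φ: diag S → W̄S, which sends a p-simplex t ∈ S_{p,p} to Φt = ((d_1^h)^p t, (d_2^h)^{p-1} d_0^v t, ..., (d_{m+1}^h)^{p-m}(d_0^v)^m t, ..., (d_0^v)^p t), is a well-defined morphism of simplicial sets, natural in S. -/

import Mathlib

/-!
STATEMENT 1: For any bisimplicial set `S`, the map `Φ : diag S → W̄S` given by
`Φ t = ((d_1^h)^p t, …, (d_{m+1}^h)^{p-m}(d_0^v)^m t, …, (d_0^v)^p t)` is a well-defined
morphism of simplicial sets, natural in `S`.
-/

open CategoryTheory Opposite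

open CategoryTheory Opposite

abbrev BiSSet := SimplexCategoryᵒᵖ ⥤ SSet.{0}

namespace BiSSet

variable (S : BiSSet)

def obj2 (p q : ℕ) : Type :=
  (S.obj (op (SimplexCategory.mk p))).obj (op (SimplexCategory.mk q))

def arr (m n : ℕ) (f : ℕ → ℕ) (hf : Monotone f) :
    SimplexCategory.mk m ⟶ SimplexCategory.mk n :=
  SimplexCategory.mkHom ⟨fun a => ⟨min (f a.val) n, by omega⟩, fun a b hab => by
    have : f a.val ≤ f b.val := hf hab
    simp only [Fin.mk_le_mk]
    omega⟩

def hAct {p p' q : ℕ} (f : SimplexCategory.mk p' ⟶ SimplexCategory.mk p) :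
    S.obj2 p q → S.obj2 p' q := fun t => (S.map f.op).app _ t

def vAct {p q q' : ℕ} (f : SimplexCategory.mk q' ⟶ SimplexCategory.mk q) :
    S.obj2 p q → S.obj2 p q' := fun t => (S.obj _).map f.op t

def fc (i : ℕ) : ℕ → ℕ := fun a => if a < i then a else a + 1
def dgm (i : ℕ) : ℕ → ℕ := fun a => if a ≤ i then a else a - 1
def fcIter (i k : ℕ) : ℕ → ℕ := fun a => if a < i then a else a + k

lemma fc_mono (i : ℕ) : Monotone (fc i) := fun a b h => by
  simp only [fc]; split <;> split <;> omega
lemma dgm_mono (i : ℕ) : Monotone (dgm i) := fun a b h => by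
  simp only [dgm]; split <;> split <;> omega
lemma fcIter_mono (i k : ℕ) : Monotone (fcIter i k) := fun a b h => by
  simp only [fcIter]; split <;> split <;> omega

def dh (i : ℕ) {p' p q : ℕ} : S.obj2 p q → S.obj2 p' q :=
  S.hAct (arr p' p (fc i) (fc_mono i))
def dv (i : ℕ) {p q' q : ℕ} : S.obj2 p q → S.obj2 p q' :=
  S.vAct (arr q' q (fc i) (fc_mono i))
def sh (i : ℕ) {p' p q : ℕ} : S.obj2 p q → S.obj2 p' q :=
  S.hAct (arr p' p (dgm i) (dgm_mono i))
def sv (i : ℕ) {p q' q : ℕ} : S.obj2 p q → S.obj2 p q' :=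
  S.vAct (arr q' q (dgm i) (dgm_mono i))

def ocast {p q p' q' : ℕ} (hp : p = p') (hq : q = q') : S.obj2 p q → S.obj2 p' q' := by
  subst hp; subst hq; exact id

def Wbar (p : ℕ) : Type :=
  { t : ∀ m : Fin (p + 1), S.obj2 m.val (p - m.val) //
    ∀ m : Fin p, S.dv 0 (t m.castSucc) = S.dh (m.val + 1) (t m.succ) }

def wFaceTuple {p : ℕ} (i : ℕ) (t : S.Wbar (p + 1)) (m : Fin (p + 1)) :
    S.obj2 m.val (p - m.val) :=
  if h : m.val < i then S.dv (i - m.val) (t.1 ⟨m.val, by omega⟩)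
  else S.ocast rfl (show p + 1 - (m.val + 1) = p - m.val by omega)
    (S.dh i (t.1 ⟨m.val + 1, by omega⟩))

def wDegTuple {p : ℕ} (i : ℕ) (hi : i ≤ p) (t : S.Wbar p) (m : Fin (p + 2)) :
    S.obj2 m.val (p + 1 - m.val) :=
  if h : m.val ≤ i then S.sv (i - m.val) (t.1 ⟨m.val, by omega⟩)
  else S.ocast rfl (show p - (m.val - 1) = p + 1 - m.val by omega)
    (S.sh i (t.1 ⟨m.val - 1, by omega⟩))

/-- `Φ t = ((d_1^h)^p t, (d_2^h)^{p-1} d_0^v t, …, (d_{m+1}^h)^{p-m}(d_0^v)^m t, …, (d_0^v)^p t)`. -/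
def phiTuple {p : ℕ} (t : S.obj2 p p) (m : Fin (p + 1)) : S.obj2 m.val (p - m.val) :=
  S.hAct (arr m.val p (fcIter (m.val + 1) (p - m.val)) (fcIter_mono _ _))
    (S.vAct (arr (p - m.val) p (fcIter 0 m.val) (fcIter_mono _ _)) t)

end BiSSet

/-- The diagonal simplicial set of a bisimplicial set. -/
def diagSSet (S : BiSSet) : SSet.{0} := Functor.diag _ ⋙ Functor.uncurry.obj S

/-- The map induced on diagonals by a morphism of bisimplicial sets. -/
def diagMap {S T : BiSSet} (α : S ⟶ T) : diagSSet S ⟶ diagSSet T :=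
  CategoryTheory.Functor.whiskerLeft (Functor.diag _) (Functor.uncurry.map α)

/-!
A simplicial operator `θ : [q] → [p]` acts on `(t_0, …, t_p) ∈ W̄S_p` by taking as `k`-th entry
`t_{θ k}` acted on horizontally by `θ|[0,k] : [k] → [θ k]` and vertically by
`j ↦ θ (k + j) - θ k`. Iterating the defining equations of `W̄S` gives
`(d_0^v)^{m'-m} t_m = (d_{m+1}^h ⋯ d_{m'}^h) t_{m'}` for `m ≤ m'`, so an entry obtained from `t_m`
can be re-expressed through any later `t_{m'}` (`Wbar.biAct_val_eq_of_le`). This single rule gives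
the compatibility equations of `θ^*`, its functoriality, and the face and degeneracy formulas.
The `m`-th entry of `Φ t` is `t` acted on by the front inclusion `[m] → [p]` and the back inclusion
`[p - m] → [p]`, so the `k`-th entries of `θ^*(Φ t)` and of `Φ(θ^* t)` are both `t` acted on by the
front and back parts of `θ` at `k`. Naturality in `S` holds because everything is built from the
two actions of `S`.

Order maps `Fin (q + 1) → Fin (p + 1)` are extended to `ℕ → ℕ` (`natFun`), so that equalities
between composites of `arr`s reduce to linear arithmetic.
-/

namespace BiSSet

section Arrows

variable {a b c : ℕ}

lemma arr_ext {f g : ℕ → ℕ} (hf : Monotone f) (hg : Monotone g)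
    (h : ∀ x ≤ a, min (f x) b = min (g x) b) : arr a b f hf = arr a b g hg := by
  ext x
  exact h x x.is_le

lemma arr_comp_arr {f g : ℕ → ℕ} (hf : Monotone f) (hg : Monotone g) :
    arr a b f hf ≫ arr b c g hg =
      arr a c (fun x => g (min (f x) b)) (hg.comp fun _ _ h => min_le_min_right b (hf h)) :=
  rfl

lemma arr_comp_arr_of_le {f g : ℕ → ℕ} (hf : Monotone f) (hg : Monotone g)
    (hfb : ∀ x ≤ a, f x ≤ b) :
    arr a b f hf ≫ arr b c g hg = arr a c (g ∘ f) (hg.comp hf) := by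
  rw [arr_comp_arr]
  exact arr_ext _ _ fun x hx => by rw [min_eq_left (hfb x hx), Function.comp_apply]

lemma arr_comp_arr_eq_arr_comp_arr {b' : ℕ} {f g f' g' : ℕ → ℕ} (hf : Monotone f)
    (hg : Monotone g) (hf' : Monotone f') (hg' : Monotone g')
    (hfb : ∀ x ≤ a, f x ≤ b) (hfb' : ∀ x ≤ a, f' x ≤ b')
    (h : ∀ x ≤ a, min (g (f x)) c = min (g' (f' x)) c) :
    arr a b f hf ≫ arr b c g hg = arr a b' f' hf' ≫ arr b' c g' hg' := by
  rw [arr_comp_arr_of_le _ _ hfb, arr_comp_arr_of_le _ _ hfb']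
  exact arr_ext _ _ h

lemma arr_eq_id {f : ℕ → ℕ} (hf : Monotone f) (h : ∀ x ≤ a, f x = x) :
    arr a a f hf = 𝟙 _ := by
  ext x
  exact (congrArg (min · a) (h x x.is_le)).trans (min_eq_left x.is_le)

lemma monotone_add_const (d : ℕ) : Monotone fun j : ℕ => j + d :=
  fun _ _ h => Nat.add_le_add_right h d

end Arrows

section NatFun

variable {q p r : ℕ}

def natFun (F : Fin (q + 1) →o Fin (p + 1)) (a : ℕ) : ℕ :=
  (F ⟨min a q, by omega⟩).val

lemma natFun_mono (F : Fin (q + 1) →o Fin (p + 1)) : Monotone (natFun F) :=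
  fun a b h => F.monotone (by simp only [Fin.mk_le_mk]; omega)

lemma natFun_le (F : Fin (q + 1) →o Fin (p + 1)) (a : ℕ) : natFun F a ≤ p :=
  (F _).is_le

lemma natFun_comp (F : Fin (q + 1) →o Fin (p + 1)) (G : Fin (p + 1) →o Fin (r + 1)) (a : ℕ) :
    natFun (G.comp F) a = natFun G (natFun F a) := by
  simp only [natFun, OrderHom.comp_coe, Function.comp_apply, min_eq_left (Fin.is_le _)]

lemma natFun_id (a : ℕ) (ha : a ≤ q) :
    natFun (OrderHom.id : Fin (q + 1) →o Fin (q + 1)) a = a :=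
  min_eq_left ha

lemma natFun_shift_mono (F : Fin (q + 1) →o Fin (p + 1)) (k m : ℕ) :
    Monotone fun j => natFun F (k + j) - m :=
  fun _ _ h => Nat.sub_le_sub_right (natFun_mono F (Nat.add_le_add_left h k)) m

lemma natFun_delta (i : Fin (p + 2)) (a : ℕ) :
    natFun (SimplexCategory.δ i).toOrderHom a = fc i (min a p) := by
  change (i.succAbove ⟨min a p, _⟩).val = _
  simp only [Fin.succAbove, Fin.lt_def, Fin.val_castSucc, fc, apply_ite Fin.val, Fin.val_succ]

lemma natFun_sigma (i : Fin (p + 1)) (a : ℕ) :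
    natFun (SimplexCategory.σ i).toOrderHom a = dgm i (min a (p + 1)) := by
  change (i.predAbove ⟨min a (p + 1), _⟩).val = _
  simp only [Fin.predAbove, Fin.lt_def, Fin.val_castSucc, dgm, apply_dite Fin.val, Fin.val_pred,
    Fin.coe_castPred]
  split_ifs <;> omega

lemma arr_natFun (g : SimplexCategory.mk q ⟶ SimplexCategory.mk p) :
    arr q p (natFun g.toOrderHom) (natFun_mono _) = g := by
  ext x
  exact (min_eq_left (Fin.is_le _)).trans (by simp [min_eq_left x.is_le])

end NatFun

variable (S : BiSSet)

section Actions

variable {p p' p'' q q' q'' : ℕ}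

lemma hAct_hAct (f : SimplexCategory.mk p' ⟶ SimplexCategory.mk p)
    (g : SimplexCategory.mk p ⟶ SimplexCategory.mk p'') (t : S.obj2 p'' q) :
    S.hAct f (S.hAct g t) = S.hAct (f ≫ g) t := by
  simp only [hAct, op_comp, Functor.map_comp, NatTrans.comp_app]
  rfl

lemma vAct_vAct (f : SimplexCategory.mk q' ⟶ SimplexCategory.mk q)
    (g : SimplexCategory.mk q ⟶ SimplexCategory.mk q'') (t : S.obj2 p q'') :
    S.vAct f (S.vAct g t) = S.vAct (f ≫ g) t := by
  simp only [vAct, op_comp, Functor.map_comp]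
  rfl

lemma hAct_vAct (f : SimplexCategory.mk p' ⟶ SimplexCategory.mk p)
    (g : SimplexCategory.mk q' ⟶ SimplexCategory.mk q) (t : S.obj2 p q) :
    S.hAct f (S.vAct g t) = S.vAct g (S.hAct f t) :=
  NatTrans.naturality_apply (S.map f.op) g.op t

lemma hAct_id (t : S.obj2 p q) : S.hAct (𝟙 _) t = t := by
  simp only [hAct, op_id, CategoryTheory.Functor.map_id, NatTrans.id_app]
  rfl

lemma vAct_id (t : S.obj2 p q) : S.vAct (𝟙 _) t = t := by
  simp only [vAct, op_id, CategoryTheory.Functor.map_id]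
  rfl

def biAct (f : SimplexCategory.mk p' ⟶ SimplexCategory.mk p)
    (g : SimplexCategory.mk q' ⟶ SimplexCategory.mk q) (t : S.obj2 p q) : S.obj2 p' q' :=
  S.vAct g (S.hAct f t)

lemma biAct_biAct (f : SimplexCategory.mk p' ⟶ SimplexCategory.mk p)
    (f' : SimplexCategory.mk p ⟶ SimplexCategory.mk p'')
    (g : SimplexCategory.mk q' ⟶ SimplexCategory.mk q)
    (g' : SimplexCategory.mk q ⟶ SimplexCategory.mk q'') (t : S.obj2 p'' q'') :
    S.biAct f g (S.biAct f' g' t) = S.biAct (f ≫ f') (g ≫ g') t := by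
  simp only [biAct, ← hAct_hAct, ← vAct_vAct, hAct_vAct]

lemma biAct_id (t : S.obj2 p q) : S.biAct (𝟙 _) (𝟙 _) t = t := by
  rw [biAct, hAct_id, vAct_id]

lemma hAct_eq_biAct (f : SimplexCategory.mk p' ⟶ SimplexCategory.mk p) (t : S.obj2 p q) :
    S.hAct f t = S.biAct f (𝟙 _) t :=
  (S.vAct_id _).symm

lemma vAct_eq_biAct (g : SimplexCategory.mk q' ⟶ SimplexCategory.mk q) (t : S.obj2 p q) :
    S.vAct g t = S.biAct (𝟙 _) g t := by
  rw [biAct, hAct_id]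

lemma ocast_eq_vAct (hq : q = q') (t : S.obj2 p q) :
    S.ocast rfl hq t = S.vAct (arr q' q (fun j => j) monotone_id) t := by
  subst hq
  rw [arr_eq_id (f := fun j => j) monotone_id fun _ _ => rfl, vAct_id]
  rfl

end Actions

namespace Wbar

variable {S} {p : ℕ} (t : S.Wbar p)

lemma vAct_shift_eq_hAct_incl {m m' : ℕ} (hmm' : m ≤ m') (hm' : m' ≤ p) :
    S.vAct (arr (p - m') (p - m) (· + (m' - m)) (monotone_add_const _)) (t.1 ⟨m, by omega⟩) =
      S.hAct (arr m m' (fun a => a) monotone_id) (t.1 ⟨m', by omega⟩) := by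
  induction m', hmm' using Nat.le_induction with
  | base =>
    rw [arr_eq_id _ fun _ _ => by omega, arr_eq_id (f := fun a => a) monotone_id fun _ _ => rfl,
      vAct_id, hAct_id]
  | succ n hmn ih =>
    have hcompat : S.vAct (arr (p - (n + 1)) (p - n) (fc 0) (fc_mono 0)) (t.1 ⟨n, by omega⟩) =
        S.hAct (arr n (n + 1) (fc (n + 1)) (fc_mono _)) (t.1 ⟨n + 1, by omega⟩) :=
      t.2 ⟨n, by omega⟩
    have hshift : arr (p - (n + 1)) (p - m) (· + (n + 1 - m)) (monotone_add_const _) =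
        arr (p - (n + 1)) (p - n) (fc 0) (fc_mono 0) ≫
          arr (p - n) (p - m) (· + (n - m)) (monotone_add_const _) := by
      rw [arr_comp_arr]
      exact arr_ext _ _ fun x hx => by simp only [fc]; split_ifs <;> omega
    have hincl : arr m (n + 1) (fun a => a) monotone_id =
        arr m n (fun a => a) monotone_id ≫ arr n (n + 1) (fc (n + 1)) (fc_mono _) := by
      rw [arr_comp_arr]
      exact arr_ext _ _ fun x hx => by simp only [fc]; split_ifs <;> omega
    rw [hshift, ← vAct_vAct, ih (by omega), ← hAct_vAct, hcompat, hAct_hAct, hincl]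

lemma biAct_val_eq_of_le {m m' k r : ℕ} (hmm' : m ≤ m') (hm' : m' ≤ p)
    (F : SimplexCategory.mk k ⟶ SimplexCategory.mk m)
    (G : SimplexCategory.mk r ⟶ SimplexCategory.mk (p - m))
    (F' : SimplexCategory.mk k ⟶ SimplexCategory.mk m')
    (G' : SimplexCategory.mk r ⟶ SimplexCategory.mk (p - m'))
    (hF : F ≫ arr m m' (fun a => a) monotone_id = F')
    (hG : G' ≫ arr (p - m') (p - m) (· + (m' - m)) (monotone_add_const _) = G) :
    S.biAct F G (t.1 ⟨m, by omega⟩) = S.biAct F' G' (t.1 ⟨m', by omega⟩) := by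
  calc S.biAct F G (t.1 ⟨m, _⟩)
      = S.biAct F G' (S.vAct (arr (p - m') (p - m) (· + (m' - m)) (monotone_add_const _))
          (t.1 ⟨m, by omega⟩)) := by
        rw [vAct_eq_biAct, biAct_biAct, Category.comp_id, hG]
    _ = S.biAct F' G' (t.1 ⟨m', by omega⟩) := by
        rw [t.vAct_shift_eq_hAct_incl hmm' hm', hAct_eq_biAct, biAct_biAct, Category.comp_id, hF]

end Wbar

section WMap

variable {q p r : ℕ}

def wMapTuple (F : Fin (q + 1) →o Fin (p + 1)) (t : S.Wbar p) (k : ℕ) : S.obj2 k (q - k) :=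
  S.biAct (arr k (natFun F k) (natFun F) (natFun_mono F))
    (arr (q - k) (p - natFun F k) (fun j => natFun F (k + j) - natFun F k)
      (natFun_shift_mono F k _))
    (t.1 ⟨natFun F k, Nat.lt_succ_of_le (natFun_le F k)⟩)

lemma wMapTuple_compat (F : Fin (q + 1) →o Fin (p + 1)) (t : S.Wbar p) {k : ℕ} (hk : k < q) :
    S.dv 0 (S.wMapTuple F t k) = S.dh (k + 1) (S.wMapTuple F t (k + 1)) := by
  have hmono : natFun F k ≤ natFun F (k + 1) := natFun_mono F (Nat.le_succ _)
  have hle : ∀ x, natFun F x ≤ p := natFun_le F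
  rw [dv, vAct_eq_biAct, wMapTuple, biAct_biAct, dh, hAct_eq_biAct, wMapTuple, biAct_biAct]
  simp only [Category.id_comp]
  refine t.biAct_val_eq_of_le hmono (hle _) _ _ _ _ ?_ ?_
  · refine arr_comp_arr_eq_arr_comp_arr _ _ _ _ (fun x hx => natFun_mono F hx)
      (fun x hx => by simp only [fc]; split_ifs <;> omega) fun x hx => ?_
    simp only [fc]
    split_ifs <;> omega
  · refine arr_comp_arr_eq_arr_comp_arr _ _ _ _ (fun x hx => by have := hle (k + 1 + x); omega)
      (fun x hx => by simp only [fc]; split_ifs <;> omega) fun x hx => ?_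
    have := natFun_mono F (show k + 1 ≤ k + 1 + x by omega)
    simp only [fc, if_neg (Nat.not_lt_zero x), show k + (x + 1) = k + 1 + x by omega]
    omega

def wMap (F : Fin (q + 1) →o Fin (p + 1)) (t : S.Wbar p) : S.Wbar q :=
  ⟨fun k => S.wMapTuple F t k, fun k => S.wMapTuple_compat F t k.isLt⟩

lemma wMap_id (t : S.Wbar q) : S.wMap OrderHom.id t = t := by
  refine Subtype.ext (funext fun k => ?_)
  have hid : ∀ a ≤ q, natFun (OrderHom.id : Fin (q + 1) →o Fin (q + 1)) a = a := natFun_id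
  have hk : natFun (OrderHom.id : Fin (q + 1) →o Fin (q + 1)) k = k := hid k k.is_le
  refine (t.biAct_val_eq_of_le hk.le k.is_le _ _ (𝟙 _) (𝟙 _) ?_ ?_).trans (S.biAct_id _)
  · rw [arr_comp_arr]
    exact arr_eq_id _ fun x hx => by simp only [hid x (by omega)]; omega
  · rw [Category.id_comp]
    exact arr_ext _ _ fun x hx => by simp only [hid _ (show k + x ≤ q by omega)]; omega

lemma wMap_comp (F : Fin (q + 1) →o Fin (p + 1)) (G : Fin (p + 1) →o Fin (r + 1))
    (t : S.Wbar r) : S.wMap F (S.wMap G t) = S.wMap (G.comp F) t := by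
  refine Subtype.ext (funext fun k => ?_)
  have hcomp : ∀ a, natFun (G.comp F) a = natFun G (natFun F a) := natFun_comp F G
  have hF := natFun_mono F
  have hG := natFun_mono G
  dsimp only [wMap, wMapTuple]
  rw [biAct_biAct]
  refine t.biAct_val_eq_of_le (hcomp k).ge (natFun_le _ _) _ _ _ _ ?_ ?_
  · rw [arr_comp_arr, arr_comp_arr]
    exact arr_ext _ _ fun x hx => by
      simp only [min_eq_left (hF hx), min_eq_left (hG (hF hx)), hcomp]
  · rw [arr_comp_arr, arr_comp_arr]
    refine arr_ext _ _ fun x hx => ?_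
    have h1 : natFun F k ≤ natFun F (k + x) := hF (by omega)
    have h2 := natFun_le F (k + x)
    have h3 := natFun_le G (natFun F (k + x))
    have h4 : natFun G (natFun F k) ≤ natFun G (natFun F (k + x)) := hG h1
    simp only [min_eq_left (show natFun F (k + x) - natFun F k ≤ p - natFun F k by omega),
      Nat.add_sub_cancel' h1, hcomp]
    omega

lemma wMap_delta (i : Fin (p + 2)) (x : S.Wbar (p + 1)) :
    (S.wMap (SimplexCategory.δ i).toOrderHom x).1 = S.wFaceTuple i.val x := by
  funext m
  have hm : m.val ≤ p := m.is_le
  dsimp only [wMap, wMapTuple, wFaceTuple]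
  split_ifs with h
  · rw [dv, vAct_eq_biAct]
    refine x.biAct_val_eq_of_le (by simp only [natFun_delta, fc]; split_ifs <;> omega) (by omega)
      _ _ _ _ ?_ ?_
    · rw [arr_comp_arr]
      exact arr_eq_id _ fun y hy => by simp only [natFun_delta, fc]; split_ifs <;> omega
    · rw [arr_comp_arr]
      exact arr_ext _ _ fun y hy => by simp only [natFun_delta, fc]; split_ifs <;> omega
  · rw [ocast_eq_vAct]
    refine x.biAct_val_eq_of_le (by simp only [natFun_delta, fc]; split_ifs <;> omega) (by omega)
      _ _ _ _ ?_ ?_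
    · rw [arr_comp_arr]
      exact arr_ext _ _ fun y hy => by simp only [natFun_delta, fc]; split_ifs <;> omega
    · rw [arr_comp_arr]
      exact arr_ext _ _ fun y hy => by simp only [natFun_delta, fc]; split_ifs <;> omega

lemma wMap_sigma (i : Fin (p + 1)) (x : S.Wbar p) :
    (S.wMap (SimplexCategory.σ i).toOrderHom x).1 = S.wDegTuple i.val i.is_le x := by
  funext m
  have hm : m.val ≤ p + 1 := m.is_le
  have hi : i.val ≤ p := i.is_le
  dsimp only [wMap, wMapTuple, wDegTuple]
  split_ifs with h
  · rw [sv, vAct_eq_biAct]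
    refine x.biAct_val_eq_of_le (by simp only [natFun_sigma, dgm]; split_ifs <;> omega) (by omega)
      _ _ _ _ ?_ ?_
    · rw [arr_comp_arr]
      exact arr_eq_id _ fun y hy => by simp only [natFun_sigma, dgm]; split_ifs <;> omega
    · rw [arr_comp_arr]
      exact arr_ext _ _ fun y hy => by simp only [natFun_sigma, dgm]; split_ifs <;> omega
  · rw [ocast_eq_vAct]
    refine x.biAct_val_eq_of_le (by simp only [natFun_sigma, dgm]; split_ifs <;> omega) (by omega)
      _ _ _ _ ?_ ?_
    · rw [arr_comp_arr]
      exact arr_ext _ _ fun y hy => by simp only [natFun_sigma, dgm]; split_ifs <;> omega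
    · rw [arr_comp_arr]
      exact arr_ext _ _ fun y hy => by simp only [natFun_sigma, dgm]; split_ifs <;> omega

end WMap

section Phi

variable {p q : ℕ}

lemma phiTuple_eq_biAct (t : S.obj2 p p) (m : Fin (p + 1)) :
    S.phiTuple t m = S.biAct (arr m p (fcIter (m + 1) (p - m)) (fcIter_mono _ _))
      (arr (p - m) p (fcIter 0 m) (fcIter_mono _ _)) t :=
  S.hAct_vAct _ _ t

lemma phiTuple_compat (t : S.obj2 p p) {k : ℕ} (hk : k < p) :
    S.dv 0 (S.phiTuple t ⟨k, by omega⟩) =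
      S.dh (k + 1) (S.phiTuple t ⟨k + 1, by omega⟩) := by
  rw [phiTuple_eq_biAct, phiTuple_eq_biAct, dv, vAct_eq_biAct, biAct_biAct, dh, hAct_eq_biAct,
    biAct_biAct]
  simp only [Category.id_comp]
  congr 1 <;> rw [arr_comp_arr] <;>
    exact arr_ext _ _ fun x hx => by simp only [fc, fcIter]; split_ifs <;> omega

def phiWbar (t : S.obj2 p p) : S.Wbar p :=
  ⟨S.phiTuple t, fun k => S.phiTuple_compat t k.isLt⟩

lemma wMap_phiWbar (g : SimplexCategory.mk q ⟶ SimplexCategory.mk p) (t : S.obj2 p p) :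
    S.wMap g.toOrderHom (S.phiWbar t) = S.phiWbar (S.biAct g g t) := by
  refine Subtype.ext (funext fun k => ?_)
  conv_rhs => rw [← arr_natFun g]
  dsimp only [wMap, wMapTuple, phiWbar]
  rw [phiTuple_eq_biAct, phiTuple_eq_biAct, biAct_biAct, biAct_biAct]
  have hF := natFun_mono g.toOrderHom
  have hle : ∀ a, natFun g.toOrderHom a ≤ p := natFun_le _
  congr 1
  · refine arr_comp_arr_eq_arr_comp_arr _ _ _ _ (fun x hx => hF hx)
      (fun x hx => by simp only [fcIter]; split_ifs <;> omega) fun x hx => ?_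
    have := hF hx
    simp only [fcIter]
    split_ifs <;> omega
  · refine arr_comp_arr_eq_arr_comp_arr _ _ _ _ (fun x hx => by have := hle (k + x); omega)
      (fun x hx => by simp only [fcIter]; split_ifs <;> omega) fun x hx => ?_
    have : natFun g.toOrderHom k ≤ natFun g.toOrderHom (k + x) := hF (by omega)
    simp only [fcIter, if_neg (Nat.not_lt_zero _), Nat.add_comm x]
    omega

end Phi

section Naturality

variable {S} {T : BiSSet} (α : S ⟶ T) {p p' q q' : ℕ}

lemma hAct_naturality (f : SimplexCategory.mk p' ⟶ SimplexCategory.mk p) (t : S.obj2 p q) :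
    (α.app _).app _ (S.hAct f t) = T.hAct f ((α.app _).app _ t) :=
  types_congr_hom (NatTrans.congr_app (α.naturality f.op) _) t

lemma vAct_naturality (g : SimplexCategory.mk q' ⟶ SimplexCategory.mk q) (t : S.obj2 p q) :
    (α.app _).app _ (S.vAct g t) = T.vAct g ((α.app _).app _ t) :=
  NatTrans.naturality_apply (α.app _) g.op t

lemma biAct_naturality (f : SimplexCategory.mk p' ⟶ SimplexCategory.mk p)
    (g : SimplexCategory.mk q' ⟶ SimplexCategory.mk q) (t : S.obj2 p q) :
    (α.app _).app _ (S.biAct f g t) = T.biAct f g ((α.app _).app _ t) := by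
  rw [biAct, vAct_naturality, hAct_naturality]
  rfl

def Wbar.map (t : S.Wbar p) : T.Wbar p :=
  ⟨fun m => (α.app _).app _ (t.1 m), fun m => by
    rw [dv, dh, ← vAct_naturality, ← hAct_naturality]
    exact congrArg _ (t.2 m)⟩

lemma Wbar.map_wMap (F : Fin (q + 1) →o Fin (p + 1)) (t : S.Wbar p) :
    Wbar.map α (S.wMap F t) = T.wMap F (Wbar.map α t) :=
  Subtype.ext (funext fun _ => biAct_naturality α _ _ _)

lemma Wbar.map_phiWbar (t : S.obj2 p p) :
    Wbar.map α (S.phiWbar t) = T.phiWbar ((α.app _).app _ t) :=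
  Subtype.ext (funext fun m => (congrArg _ (S.phiTuple_eq_biAct t m)).trans
    ((biAct_naturality α _ _ t).trans (T.phiTuple_eq_biAct _ m).symm))

end Naturality

def codiag (S : BiSSet) : SSet.{0} where
  obj X := S.Wbar X.unop.len
  map f := TypeCat.ofHom (S.wMap f.unop.toOrderHom)
  map_id X := by
    ext u
    exact S.wMap_id u
  map_comp f g := by
    ext u
    exact (S.wMap_comp _ _ u).symm

def codiagMap {S T : BiSSet} (α : S ⟶ T) : S.codiag ⟶ T.codiag where
  app X := TypeCat.ofHom (Wbar.map α)
  naturality X Y h := by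
    ext u
    exact Wbar.map_wMap α _ u

def phi (S : BiSSet) : diagSSet S ⟶ S.codiag where
  app X := TypeCat.ofHom S.phiWbar
  naturality X Y h := by
    ext t
    exact (S.wMap_phiWbar h.unop t).symm

end BiSSet

/-- For any bisimplicial set `S` there is a codiagonal simplicial set
`W S` (with the structure described in the previous statement), functorial in `S`, and a
simplicial map `Φ S : diag S ⟶ W̄ S`, given on a `p`-simplex `t ∈ S_{p,p}` by
`Φ t = ((d_1^h)^p t, …, (d_{m+1}^h)^{p-m}(d_0^v)^m t, …, (d_0^v)^p t)`,
which is natural in `S`. -/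
theorem phi_is_simplicial_and_natural :
    ∃ (W : BiSSet → SSet.{0})
      (e : ∀ (S : BiSSet) (p : ℕ), (W S).obj (op (SimplexCategory.mk p)) ≃ S.Wbar p)
      (Wmap : ∀ {S T : BiSSet}, (S ⟶ T) → ((W S) ⟶ (W T)))
      (Φ : ∀ S : BiSSet, diagSSet S ⟶ W S),
      -- `W S` carries the codiagonal simplicial structure
      (∀ (S : BiSSet) (p : ℕ) (i : Fin (p + 2))
          (x : (W S).obj (op (SimplexCategory.mk (p + 1)))),
        ((e S p) ((W S).map (SimplexCategory.δ i).op x)).1 =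
          S.wFaceTuple i.val (e S (p + 1) x)) ∧
      (∀ (S : BiSSet) (p : ℕ) (i : Fin (p + 1))
          (x : (W S).obj (op (SimplexCategory.mk p))),
        ((e S (p + 1)) ((W S).map (SimplexCategory.σ i).op x)).1 =
          S.wDegTuple i.val i.is_le (e S p x)) ∧
      -- `Wmap` is induced componentwise, so that `W` is functorial in `S`
      (∀ (S T : BiSSet) (α : S ⟶ T) (p : ℕ)
          (x : (W S).obj (op (SimplexCategory.mk p))) (m : Fin (p + 1)),
        ((e T p) ((Wmap α).app (op (SimplexCategory.mk p)) x)).1 m =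
          (α.app (op (SimplexCategory.mk m.val))).app
            (op (SimplexCategory.mk (p - m.val))) (((e S p) x).1 m)) ∧
      -- `Φ` is given by the stated formula (in particular it is well defined:
      -- the tuple `phiTuple` satisfies the compatibility equations of `W̄S`)
      (∀ (S : BiSSet) (p : ℕ) (t : (diagSSet S).obj (op (SimplexCategory.mk p))),
        ((e S p) ((Φ S).app (op (SimplexCategory.mk p)) t)).1 = S.phiTuple t) ∧
      -- naturality of `Φ` in `S`
      (∀ (S T : BiSSet) (α : S ⟶ T), Φ S ≫ Wmap α = diagMap α ≫ Φ T) := by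
  refine ⟨BiSSet.codiag, fun _ _ => Equiv.refl _, BiSSet.codiagMap, BiSSet.phi,
    fun S _ i x => S.wMap_delta i x, fun S _ i x => S.wMap_sigma i x,
    fun _ _ _ _ _ _ => rfl, fun _ _ _ => rfl, fun _ _ α => ?_⟩
  ext X t
  exact BiSSet.Wbar.map_phiWbar α t
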